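/- Let χ : {1,…,n} → {ℓ,c,r} with χ⁻¹(c) ∩ {2,…,n−1} = {l₁ < ⋯ < l_m}, l₀ = 1, l_{m+1} = n. Then the map α₁'(π) = (π|_{[1,l₁]}, π|_{[l₁,n]}) is an order isomorphism from IBNC(χ) onto IBNC(χ₁) × IBNC(χ'), and the map α(π) = (π|_{[l₀,l₁]}, …, π|_{[l_m,l_{m+1}]}) is an order isomorphism from IBNC(χ) onto NC(χ₁) × NC(χ₂) × ⋯ × NC(χ_{m+1}), where all sets of partitions carry the reversed refinement order and products carry the componentwise order. Consequently IBNC(χ) is a lattice with respect to the reversed refinement order. -/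

import Mathlib

namespace FFB

/-- The three letters ℓ, c, r labelling the faces. -/
inductive Letter : Type where
  | l | c | r
deriving DecidableEq

/-- `x` is one of the letters `ℓ`, `c`. -/
def isLC (x : Letter) : Prop := x = Letter.l ∨ x = Letter.c

variable {α : Type*}

/-- The total order `≺_χ` on the index set determined by `χ`:
the elements of `χ⁻¹{ℓ,c}` in increasing order followed by the elements of
`χ⁻¹{r}` in decreasing order. -/
def chiLT [LT α] (χ : α → Letter) (i j : α) : Prop :=
  (isLC (χ i) ∧ isLC (χ j) ∧ i < j)
  ∨ (isLC (χ i) ∧ χ j = Letter.r)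
  ∨ (χ i = Letter.r ∧ χ j = Letter.r ∧ j < i)

/-- A partition (equivalence relation) `π` is `χ`-noncrossing if there is no quadruple
`s₁ ≺_χ r₁ ≺_χ s₂ ≺_χ r₂` with `s₁ ∼ s₂`, `r₁ ∼ r₂` lying in different blocks. -/
def ChiNoncrossing [LT α] (χ : α → Letter) (π : Setoid α) : Prop :=
  ∀ s₁ r₁ s₂ r₂ : α, chiLT χ s₁ r₁ → chiLT χ r₁ s₂ → chiLT χ s₂ r₂ →
    π s₁ s₂ → π r₁ r₂ → π s₁ r₁

/-- A partition `π` is `χ`-interval if whenever `i < j < k`, `i ∼ k` and `χ j = c`,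
then `i, j, k` all lie in the same block. -/
def ChiInterval [LT α] (χ : α → Letter) (π : Setoid α) : Prop :=
  ∀ i j k : α, i < j → j < k → χ j = Letter.c → π i k → π i j

/-- The set of interval-bi-noncrossing partitions with respect to `χ`. -/
def IBNC [LT α] (χ : α → Letter) : Set (Setoid α) :=
  {π | ChiNoncrossing χ π ∧ ChiInterval χ π}

/-- The set of `χ`-noncrossing partitions. -/
def NC [LT α] (χ : α → Letter) : Set (Setoid α) :=
  {π | ChiNoncrossing χ π}

/-- Restriction of a partition of `α` to a subset `V ⊆ α`. -/
def restrict (V : Set α) (σ : Setoid α) : Setoid V := Setoid.comap Subtype.val σ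

/-- Restriction of `χ` to a subset `V ⊆ α`. -/
def restChi (V : Set α) (χ : α → Letter) : V → Letter := fun x => χ x.1

/- `mu` is the Möbius function of the finite poset `P` (with the induced order):
it is the (two-sided) convolution inverse of the zeta function. -/
open Classical in
def IsMobius {β : Type*} [PartialOrder β] (P : Set β) (mu : β → β → ℂ) : Prop :=
  ∀ a ∈ P, ∀ b ∈ P, a ≤ b →
    ((∑ᶠ c ∈ {c | c ∈ P ∧ a ≤ c ∧ c ≤ b}, mu a c) = if a = b then 1 else 0) ∧
    ((∑ᶠ c ∈ {c | c ∈ P ∧ a ≤ c ∧ c ≤ b}, mu c b) = if a = b then 1 else 0)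

section Moments

variable {A : Type*} [Ring A] [LinearOrder α] [Finite α]

/-- `φ_V(z₁,…,zₙ) = φ(z_{l₁} ⋯ z_{l_k})` where `V = {l₁ < ⋯ < l_k}`. -/
noncomputable def phiV (φ : A → ℂ) (z : α → A) (V : Set α) : ℂ :=
  φ (((Set.toFinite V).toFinset.sort (· ≤ ·)).map z).prod

/-- `φ_σ(z₁,…,zₙ) = ∏_{V ∈ σ} φ_V(z₁,…,zₙ)`. -/
noncomputable def phiPart (φ : A → ℂ) (z : α → A) (σ : Setoid α) : ℂ :=
  ∏ᶠ q : Quotient σ, phiV φ z {y | Quotient.mk σ y = q}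

/-- The free-free-Boolean cumulant
`κ_{χ,π}(z₁,…,zₙ) = Σ_{σ ∈ IBNC(χ), σ ≤ π} μ_{IBNC(χ)}(σ,π) φ_σ(z₁,…,zₙ)`,
where `mu` is (a function which is) the Möbius function of `IBNC(χ)`. -/
noncomputable def cum (φ : A → ℂ) (χ : α → Letter)
    (mu : Setoid α → Setoid α → ℂ) (z : α → A) (π : Setoid α) : ℂ :=
  ∑ᶠ σ ∈ {σ | σ ∈ IBNC χ ∧ σ ≤ π}, mu σ π * phiPart φ z σ

end Moments

/-- Combinatorial free-free-Boolean independence: mixed cumulants vanish.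
`F i x` is the face of the `i`-th triple labelled by the letter `x`. -/
def CombFFB {A : Type*} [Ring A] [Algebra ℂ A] (φ : A →ₗ[ℂ] ℂ) {I : Type*}
    (F : I → Letter → NonUnitalSubalgebra ℂ A) : Prop :=
  ∀ (n : ℕ) (χ : Fin n → Letter) (ω : Fin n → I) (z : Fin n → A),
    (∀ k, z k ∈ F (ω k) (χ k)) → (¬ ∃ i, ∀ k, ω k = i) →
    ∀ mu : Setoid (Fin n) → Setoid (Fin n) → ℂ, IsMobius (IBNC χ) mu →
      cum (⇑φ) χ mu z ⊤ = 0

end FFB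

/-!
If every block of a partition `π` that meets both sides of a point `b` contains `b`, then `π`
is recovered from its images under `x ↦ min b x` and `x ↦ max b x`. Iterating over the cuts
`l₁ < ⋯ < l_m` (which are `c`-points, so IBNC partitions have this property at them), an IBNC
partition is the infimum of the pullbacks of its restrictions along the clamps onto the pieces
`[l_{i-1}, l_i]`. Conversely, such an infimum built from arbitrary IBNC partitions of the pieces
is IBNC: χ-noncrossing and χ-interval partitions are closed under infima, and clamping onto a
piece with `ℓ,c`-endpoints preserves `≺_χ` up to a cyclic rotation, which noncrossing does not
see. Closure under infima also makes `IBNC(χ)` a lattice.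
-/

namespace FFB

section ChiOrder

variable {α : Type*} [LinearOrder α] {χ : α → Letter} {a c x y z : α}

theorem isLC_or_eq_r (x : Letter) : isLC x ∨ x = Letter.r := by
  cases x <;> simp [isLC]

theorem chiLT_of_eq_r (hx : χ x = Letter.r) (h : chiLT χ x y) : χ y = Letter.r ∧ y < x := by
  rcases h with ⟨h, -, -⟩ | ⟨h, -⟩ | h
  all_goals first | exact h.2 | simp [isLC, hx] at h

theorem chiLT_of_isLC_of_lt (ha : isLC (χ a)) (h : a < x) : chiLT χ a x := by
  rcases isLC_or_eq_r (χ x) with hx | hx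
  · exact Or.inl ⟨ha, hx, h⟩
  · exact Or.inr (Or.inl ⟨ha, hx⟩)

theorem lt_of_chiLT_of_chiLT (hxy : chiLT χ x y) (hyz : chiLT χ y z) (hx : a < x) (hz : a < z) :
    a < y := by
  by_contra! hy
  rcases hxy with ⟨-, -, hxy⟩ | ⟨-, hyr⟩ | ⟨-, hyr, -⟩
  · exact absurd (hx.trans hxy) (not_lt.2 hy)
  all_goals exact absurd ((chiLT_of_eq_r hyr hyz).2.trans_le hy) (not_lt.2 hz.le)

theorem chiLT_min (hc : isLC (χ c) ∨ IsTop c) (h : chiLT χ x y) :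
    min c x = min c y ∨ chiLT χ (min c x) (min c y) := by
  rcases hc with hc | hc
  swap
  · rw [min_eq_right (hc x), min_eq_right (hc y)]
    exact Or.inr h
  rcases le_total x c with hx | hx <;> rcases le_total y c with hy | hy
  · rw [min_eq_right hx, min_eq_right hy]
    exact Or.inr h
  · rw [min_eq_right hx, min_eq_left hy]
    rcases hx.eq_or_lt with rfl | hx
    · exact Or.inl rfl
    rcases isLC_or_eq_r (χ x) with hxc | hxr
    · exact Or.inr (Or.inl ⟨hxc, hc, hx⟩)
    · exact absurd ((chiLT_of_eq_r hxr h).2.trans hx) (not_lt.2 hy)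
  · rw [min_eq_left hx, min_eq_right hy]
    rcases hy.eq_or_lt with rfl | hy
    · exact Or.inl rfl
    have hyr : χ y = Letter.r := by
      rcases h with ⟨-, -, hxy⟩ | ⟨-, hyr⟩ | ⟨-, hyr, -⟩
      · exact absurd (hxy.trans hy) (not_lt.2 hx)
      all_goals exact hyr
    exact Or.inr (Or.inr (Or.inl ⟨hc, hyr⟩))
  · rw [min_eq_left hx, min_eq_left hy]
    exact Or.inl rfl

end ChiOrder

section Noncrossing

variable {α : Type*} [LinearOrder α] {χ : α → Letter} {a c : α}

theorem rel_of_weak_chain (τ : Setoid α) {x₁ x₂ x₃ x₄ : α}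
    (hstrict : chiLT χ x₁ x₂ → chiLT χ x₂ x₃ → chiLT χ x₃ x₄ → τ x₁ x₂)
    (h₁₂ : x₁ = x₂ ∨ chiLT χ x₁ x₂) (h₂₃ : x₂ = x₃ ∨ chiLT χ x₂ x₃)
    (h₃₄ : x₃ = x₄ ∨ chiLT χ x₃ x₄) (h₁₃ : τ x₁ x₃) (h₂₄ : τ x₂ x₄) : τ x₁ x₂ := by
  rcases h₁₂ with rfl | h₁₂
  · exact τ.refl _
  rcases h₂₃ with rfl | h₂₃
  · exact h₁₃
  rcases h₃₄ with rfl | h₃₄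
  · exact τ.trans h₁₃ (τ.symm h₂₄)
  exact hstrict h₁₂ h₂₃ h₃₄

theorem ChiNoncrossing.rel_of_restChi {V : Set α} {σ : Setoid V}
    (hσ : ChiNoncrossing (restChi V χ) σ) {s₁ r₁ s₂ r₂ : V} (hs : σ s₁ s₂) (hr : σ r₁ r₂)
    (h₁ : chiLT χ s₁ r₁) (h₂ : chiLT χ r₁ s₂) (h₃ : chiLT χ s₂ r₂) : σ s₁ r₁ :=
  hσ s₁ r₁ s₂ r₂ h₁ h₂ h₃ hs hr

/-- The collapse `x ↦ max a x` of everything below `a` onto `a` is only cyclically monotone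
for `≺_χ`: the points it moves form an initial and a final segment of a `≺_χ`-chain.
A case analysis on which of the four points are moved rotates the chain back into `[a, c]`. -/
theorem rel_projIcc_of_chiLT (hac : a ≤ c) (ha : isLC (χ a) ∨ IsBot a)
    {σ : Setoid (Set.Icc a c)} (hσ : ChiNoncrossing (restChi (Set.Icc a c) χ) σ)
    {x₁ x₂ x₃ x₄ : α} (hx₁ : x₁ ≤ c) (hx₂ : x₂ ≤ c) (hx₃ : x₃ ≤ c) (hx₄ : x₄ ≤ c)
    (h₁₂ : chiLT χ x₁ x₂) (h₂₃ : chiLT χ x₂ x₃) (h₃₄ : chiLT χ x₃ x₄)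
    (h₁₃ : σ.comap (Set.projIcc a c hac) x₁ x₃) (h₂₄ : σ.comap (Set.projIcc a c hac) x₂ x₄) :
    σ.comap (Set.projIcc a c hac) x₁ x₂ := by
  simp only [Setoid.comap_rel] at h₁₃ h₂₄ ⊢
  have low : ∀ {x}, x ≤ a → Set.projIcc a c hac x = ⟨a, le_rfl, hac⟩ :=
    Set.projIcc_of_le_left hac
  have mem : ∀ {x} (hax : a ≤ x) (hxc : x ≤ c), Set.projIcc a c hac x = ⟨x, hax, hxc⟩ :=
    fun hax hxc => Set.projIcc_of_mem hac ⟨hax, hxc⟩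
  rcases ha with ha | ha
  swap
  · rw [mem (ha x₁) hx₁, mem (ha x₂) hx₂, mem (ha x₃) hx₃, mem (ha x₄) hx₄] at *
    exact hσ.rel_of_restChi h₁₃ h₂₄ h₁₂ h₂₃ h₃₄
  rcases lt_or_ge a x₂ with H₂ | H₂
  · rw [mem H₂.le hx₂] at h₂₄ ⊢
    rcases lt_or_ge a x₁ with H₁ | H₁
    · rw [mem H₁.le hx₁] at h₁₃ ⊢
      rcases lt_or_ge a x₃ with H₃ | H₃
      · rw [mem H₃.le hx₃] at h₁₃
        rcases lt_or_ge a x₄ with H₄ | H₄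
        · rw [mem H₄.le hx₄] at h₂₄
          exact hσ.rel_of_restChi h₁₃ h₂₄ h₁₂ h₂₃ h₃₄
        · rw [low H₄] at h₂₄
          have := hσ.rel_of_restChi (σ.symm h₂₄) h₁₃ (chiLT_of_isLC_of_lt ha H₁) h₁₂ h₂₃
          exact σ.trans (σ.symm this) (σ.symm h₂₄)
      · have H₄ : x₄ ≤ a := not_lt.1 fun H₄ => not_lt.2 H₃ (lt_of_chiLT_of_chiLT h₂₃ h₃₄ H₂ H₄)
        rw [low H₃] at h₁₃
        rw [low H₄] at h₂₄
        exact σ.trans h₁₃ (σ.symm h₂₄)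
    · rw [low H₁] at h₁₃ ⊢
      rcases lt_or_ge a x₄ with H₄ | H₄
      · have H₃ := lt_of_chiLT_of_chiLT h₂₃ h₃₄ H₂ H₄
        rw [mem H₃.le hx₃] at h₁₃
        rw [mem H₄.le hx₄] at h₂₄
        exact hσ.rel_of_restChi h₁₃ h₂₄ (chiLT_of_isLC_of_lt ha H₂) h₂₃ h₃₄
      · rw [low H₄] at h₂₄
        exact σ.symm h₂₄
  · rw [low H₂] at h₂₄ ⊢
    rcases lt_or_ge a x₁ with H₁ | H₁
    · have H₃ : x₃ ≤ a := not_lt.1 fun H₃ => not_lt.2 H₂ (lt_of_chiLT_of_chiLT h₁₂ h₂₃ H₁ H₃)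
      rwa [low H₃] at h₁₃
    · rw [low H₁]

theorem ChiNoncrossing.comap_projIcc (hac : a ≤ c) (ha : isLC (χ a) ∨ IsBot a)
    (hc : isLC (χ c) ∨ IsTop c) {σ : Setoid (Set.Icc a c)}
    (hσ : ChiNoncrossing (restChi (Set.Icc a c) χ) σ) :
    ChiNoncrossing χ (σ.comap (Set.projIcc a c hac)) := by
  intro s₁ r₁ s₂ r₂ h₁₂ h₂₃ h₃₄ hs hr
  have proj_min : ∀ x, Set.projIcc a c hac (min c x) = Set.projIcc a c hac x := fun x =>
    Subtype.ext (by simp [Set.coe_projIcc])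
  have hmin : ∀ {x y}, σ.comap (Set.projIcc a c hac) (min c x) (min c y) ↔
      σ.comap (Set.projIcc a c hac) x y := by
    intro x y
    simp only [Setoid.comap_rel, proj_min]
  rw [← hmin] at hs hr ⊢
  exact rel_of_weak_chain _
    (fun h₁₂ h₂₃ h₃₄ => rel_projIcc_of_chiLT hac ha hσ (min_le_left _ _) (min_le_left _ _)
      (min_le_left _ _) (min_le_left _ _) h₁₂ h₂₃ h₃₄ hs hr)
    (chiLT_min hc h₁₂) (chiLT_min hc h₂₃) (chiLT_min hc h₃₄) hs hr

theorem ChiInterval.comap_projIcc (hac : a ≤ c) {σ : Setoid (Set.Icc a c)}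
    (hσ : ChiInterval (restChi (Set.Icc a c) χ) σ) :
    ChiInterval χ (σ.comap (Set.projIcc a c hac)) := by
  intro i j k hij hjk hj hik
  simp only [Setoid.comap_rel] at hik ⊢
  have mono := Set.monotone_projIcc hac
  rcases (mono hij.le).eq_or_lt with h₁ | h₁
  · rw [h₁]
  rcases (mono hjk.le).eq_or_lt with h₂ | h₂
  · rwa [h₂]
  have hj' : j ∈ Set.Icc a c := by
    refine ⟨not_lt.1 fun h => ?_, not_lt.1 fun h => ?_⟩
    · rw [Set.projIcc_of_le_left hac h.le] at h₁
      exact not_lt.2 (Set.projIcc a c hac i).2.1 h₁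
    · rw [Set.projIcc_of_right_le hac h.le] at h₂
      exact not_lt.2 (Set.projIcc a c hac k).2.2 h₂
  rw [Set.projIcc_of_mem hac hj'] at h₁ h₂ ⊢
  exact hσ _ _ _ h₁ h₂ hj hik

end Noncrossing

section Restriction

variable {α : Type*} [LT α] {χ : α → Letter}

theorem sInf_mem_IBNC {S : Set (Setoid α)} (hS : S ⊆ IBNC χ) : sInf S ∈ IBNC χ :=
  ⟨fun s₁ r₁ s₂ r₂ h₁₂ h₂₃ h₃₄ hs hr τ hτ =>
      (hS hτ).1 s₁ r₁ s₂ r₂ h₁₂ h₂₃ h₃₄ (hs τ hτ) (hr τ hτ),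
    fun i j k hij hjk hj hik τ hτ => (hS hτ).2 i j k hij hjk hj (hik τ hτ)⟩

theorem restrict_mem_IBNC {π : Setoid α} (hπ : π ∈ IBNC χ) (V : Set α) :
    restrict V π ∈ IBNC (restChi V χ) :=
  ⟨fun s₁ r₁ s₂ r₂ => hπ.1 s₁ r₁ s₂ r₂, fun i j k => hπ.2 i j k⟩

end Restriction

section CutPoint

variable {α : Type*} [LinearOrder α] {π : Setoid α} {b x y : α}

def IsCutPoint (π : Setoid α) (b : α) : Prop :=
  ∀ x y, x < b → b < y → π x y → π x b

theorem ChiInterval.isCutPoint {χ : α → Letter} (hπ : ChiInterval χ π) (hb : χ b = Letter.c) :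
    IsCutPoint π b :=
  fun x y hx hy => hπ x b y hx hy hb

theorem isCutPoint_of_isBot (hb : IsBot b) : IsCutPoint π b :=
  fun x _ hx _ _ => absurd (hb x) (not_le.2 hx)

theorem isCutPoint_of_isTop (hb : IsTop b) : IsCutPoint π b :=
  fun _ y _ hy _ => absurd (hb y) (not_le.2 hy)

theorem IsCutPoint.rel_min (hb : IsCutPoint π b) (h : π x y) : π (min b x) (min b y) := by
  wlog hxy : x ≤ y generalizing x y
  · exact π.symm (this (π.symm h) (le_of_not_ge hxy))
  rcases le_or_gt y b with hy | hy
  · rwa [min_eq_right hy, min_eq_right (hxy.trans hy)]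
  rw [min_eq_left hy.le]
  rcases lt_or_ge x b with hx | hx
  · rw [min_eq_right hx.le]
    exact hb x y hx hy h
  · rw [min_eq_left hx]

theorem IsCutPoint.rel_max (hb : IsCutPoint π b) (h : π x y) : π (max b x) (max b y) := by
  wlog hxy : x ≤ y generalizing x y
  · exact π.symm (this (π.symm h) (le_of_not_ge hxy))
  rcases le_or_gt b x with hx | hx
  · rwa [max_eq_right hx, max_eq_right (hx.trans hxy)]
  rw [max_eq_left hx.le]
  rcases lt_or_ge b y with hy | hy
  · rw [max_eq_right hy.le]
    exact π.trans (π.symm (hb x y hx hy h)) h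
  · rw [max_eq_left hy]

theorem rel_of_rel_min_of_rel_max (b : α) (hmin : π (min b x) (min b y))
    (hmax : π (max b x) (max b y)) : π x y := by
  rcases le_total x b with hx | hx <;> rcases le_total y b with hy | hy
  · rwa [min_eq_right hx, min_eq_right hy] at hmin
  · rw [min_eq_right hx, min_eq_left hy] at hmin
    rw [max_eq_left hx, max_eq_right hy] at hmax
    exact π.trans hmin hmax
  · rw [min_eq_left hx, min_eq_right hy] at hmin
    rw [max_eq_right hx, max_eq_left hy] at hmax
    exact π.trans hmax hmin
  · rwa [max_eq_right hx, max_eq_right hy] at hmax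

end CutPoint

section Pieces

variable {α : Type*} [LinearOrder α] {χ : α → Letter} {k : ℕ} {b : Fin (k + 2) → α}

structure IsCutSequence (χ : α → Letter) (b : Fin (k + 2) → α) : Prop where
  monotone : Monotone b
  isBot_zero : IsBot (b 0)
  isTop_last : IsTop (b (Fin.last (k + 1)))
  eq_c : ∀ t, t ≠ 0 → t ≠ Fin.last (k + 1) → χ (b t) = Letter.c

abbrev piece (b : Fin (k + 2) → α) (i : Fin (k + 1)) : Set α :=
  Set.Icc (b i.castSucc) (b i.succ)

def projPiece (hb : Monotone b) (i : Fin (k + 1)) : α → piece b i :=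
  Set.projIcc _ _ (hb i.castSucc_le_succ)

/-- The pieces communicate only through their common endpoints. -/
def glue (hb : Monotone b) (σ : ∀ i, Setoid (piece b i)) : Setoid α :=
  ⨅ i, (σ i).comap (projPiece hb i)

theorem glue_rel_iff (hb : Monotone b) (σ : ∀ i, Setoid (piece b i)) {x y : α} :
    glue hb σ x y ↔ ∀ i, σ i (projPiece hb i x) (projPiece hb i y) := by
  rw [glue, iInf, Setoid.sInf_iff, Set.forall_mem_range]
  rfl

theorem projPiece_eq_of_ne (hb : Monotone b) {i j : Fin (k + 1)} (hij : i ≠ j) {x y : α}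
    (hx : x ∈ piece b j) (hy : y ∈ piece b j) : projPiece hb i x = projPiece hb i y := by
  rcases hij.lt_or_gt with h | h
  · have hle : b i.succ ≤ b j.castSucc := hb (Fin.succ_le_castSucc_iff.2 h)
    rw [projPiece, Set.projIcc_of_right_le _ (hle.trans hx.1),
      Set.projIcc_of_right_le _ (hle.trans hy.1)]
  · have hle : b j.succ ≤ b i.castSucc := hb (Fin.succ_le_castSucc_iff.2 h)
    rw [projPiece, Set.projIcc_of_le_left _ (hx.2.trans hle),
      Set.projIcc_of_le_left _ (hy.2.trans hle)]

theorem restrict_glue (hb : Monotone b) (σ : ∀ i, Setoid (piece b i)) (j : Fin (k + 1)) :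
    restrict (piece b j) (glue hb σ) = σ j := by
  ext ⟨x, hx⟩ ⟨y, hy⟩
  have hj : ∀ {z} (hz : z ∈ piece b j), projPiece hb j z = ⟨z, hz⟩ :=
    Set.projIcc_of_mem _
  change glue hb σ x y ↔ _
  rw [glue_rel_iff]
  refine ⟨fun h => hj hx ▸ hj hy ▸ h j, fun h i => ?_⟩
  rcases eq_or_ne i j with rfl | hij
  · rwa [hj hx, hj hy]
  · rw [projPiece_eq_of_ne hb hij hx hy]

theorem IsCutSequence.isCutPoint (hb : IsCutSequence χ b) {π : Setoid α}
    (hπ : ChiInterval χ π) (t : Fin (k + 2)) : IsCutPoint π (b t) := by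
  by_cases h0 : t = 0
  · exact h0 ▸ isCutPoint_of_isBot hb.isBot_zero
  by_cases hl : t = Fin.last (k + 1)
  · exact hl ▸ isCutPoint_of_isTop hb.isTop_last
  exact hπ.isCutPoint (hb.eq_c t h0 hl)

theorem IsCutSequence.glue_restrict (hb : IsCutSequence χ b) {π : Setoid α}
    (hπ : ChiInterval χ π) : glue hb.monotone (fun i => restrict (piece b i) π) = π := by
  ext x y
  have hproj : ∀ i, restrict (piece b i) π (projPiece hb.monotone i x) (projPiece hb.monotone i y)
      ↔ π (max (b i.castSucc) (min (b i.succ) x)) (max (b i.castSucc) (min (b i.succ) y)) :=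
    fun _ => Iff.rfl
  rw [glue_rel_iff]
  refine ⟨fun h => ?_, fun h i => (hproj i).2 <|
    (hb.isCutPoint hπ _).rel_max ((hb.isCutPoint hπ _).rel_min h)⟩
  have hmin : ∀ t, π (min (b t) x) (min (b t) y) := by
    intro t
    induction t using Fin.induction with
    | zero => rw [min_eq_left (hb.isBot_zero x), min_eq_left (hb.isBot_zero y)]
    | succ i ih =>
      refine rel_of_rel_min_of_rel_max (b i.castSucc) ?_ ((hproj i).1 (h i))
      simpa only [← min_assoc, min_eq_left (hb.monotone i.castSucc_le_succ)] using ih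
  simpa only [min_eq_right (hb.isTop_last _)] using hmin (Fin.last _)

theorem IsCutSequence.isLC_or_isBot (hb : IsCutSequence χ b) (i : Fin (k + 1)) :
    isLC (χ (b i.castSucc)) ∨ IsBot (b i.castSucc) := by
  rcases eq_or_ne i 0 with rfl | h
  · exact Or.inr hb.isBot_zero
  · exact Or.inl (Or.inr (hb.eq_c _ (Fin.castSucc_ne_zero_iff.2 h) (Fin.castSucc_ne_last i)))

theorem IsCutSequence.isLC_or_isTop (hb : IsCutSequence χ b) (i : Fin (k + 1)) :
    isLC (χ (b i.succ)) ∨ IsTop (b i.succ) := by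
  rcases eq_or_ne i (Fin.last k) with rfl | h
  · exact Or.inr (Fin.succ_last k ▸ hb.isTop_last)
  · exact Or.inl (Or.inr (hb.eq_c _ (Fin.succ_ne_zero i) ((Fin.succ_ne_last_iff i).2 h)))

theorem IsCutSequence.glue_mem_IBNC (hb : IsCutSequence χ b) {σ : ∀ i, Setoid (piece b i)}
    (hσ : ∀ i, σ i ∈ IBNC (restChi (piece b i) χ)) : glue hb.monotone σ ∈ IBNC χ :=
  sInf_mem_IBNC <| Set.range_subset_iff.2 fun i =>
    ⟨(hσ i).1.comap_projIcc _ (hb.isLC_or_isBot i) (hb.isLC_or_isTop i),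
      (hσ i).2.comap_projIcc _⟩

/-- `α(π) = (π|_{[b 0, b 1]}, …, π|_{[b k, b (k + 1)]})`, with inverse `glue`. -/
def IsCutSequence.orderIso (hb : IsCutSequence χ b) :
    IBNC χ ≃o ∀ i, IBNC (restChi (piece b i) χ) :=
  Equiv.toOrderIso
    { toFun := fun π i => ⟨restrict (piece b i) π, restrict_mem_IBNC π.2 _⟩
      invFun := fun σ => ⟨glue hb.monotone fun i => σ i, hb.glue_mem_IBNC fun i => (σ i).2⟩
      left_inv := fun π => Subtype.ext (hb.glue_restrict π.2.2)
      right_inv := fun _ => funext fun i => Subtype.ext (restrict_glue _ _ i) }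
    (fun _ _ h _ _ _ hxy => h hxy)
    (fun _ _ h _ _ hxy => (glue_rel_iff _ _).2 fun i => h i ((glue_rel_iff _ _).1 hxy i))

end Pieces

theorem exists_orderIso_prod {α : Type*} [LinearOrder α] [OrderBot α] [OrderTop α]
    {χ : α → Letter} {b : α} (hb : χ b = Letter.c) :
    ∃ e : IBNC χ ≃o IBNC (restChi (Set.Iic b) χ) × IBNC (restChi (Set.Ici b) χ),
      ∀ π, ((e π).1 : Setoid (Set.Iic b)) = restrict (Set.Iic b) π ∧
        ((e π).2 : Setoid (Set.Ici b)) = restrict (Set.Ici b) π := by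
  have hseq : IsCutSequence χ ![⊥, b, ⊤] :=
    { monotone := Fin.monotone_iff_le_succ.2 fun i => by fin_cases i <;> simp
      isBot_zero := isBot_bot
      isTop_last := isTop_top
      eq_c := fun t h0 hl => by fin_cases t <;> simp_all }
  rw [← Set.Icc_bot, ← Set.Icc_top]
  exact ⟨hseq.orderIso.trans (OrderIso.piFinTwoIso _), fun π => ⟨rfl, rfl⟩⟩

theorem IBNC_restChi_Icc_eq_NC {α : Type*} [Preorder α] {χ : α → Letter} {a c : α}
    (h : ∀ j, a < j → j < c → χ j ≠ Letter.c) :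
    IBNC (restChi (Set.Icc a c) χ) = NC (restChi (Set.Icc a c) χ) :=
  Set.ext fun _ => ⟨And.left, fun hσ => ⟨hσ, fun i j k hij hjk hj _ =>
    absurd hj (h j (i.2.1.trans_lt hij) (lt_of_lt_of_le hjk k.2.2))⟩⟩

theorem exists_isLUB_and_exists_isGLB {β : Type*} [CompleteLattice β] {S : Set β}
    (hS : ∀ T ⊆ S, sInf T ∈ S) (x y : S) :
    (∃ z : S, IsLUB {x, y} z) ∧ (∃ z : S, IsGLB {x, y} z) := by
  refine ⟨⟨⟨sInf (upperBounds {x.1, y.1} ∩ S), hS _ Set.inter_subset_right⟩, ?_, ?_⟩,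
    ⟨⟨x.1 ⊓ y.1, sInf_pair (a := x.1) ▸ hS _ (Set.pair_subset x.2 y.2)⟩,
      IsGLB.of_image Subtype.coe_le_coe ?_⟩⟩
  · rintro w hw
    exact le_sInf fun u hu => hu.1 (by rcases hw with rfl | rfl <;> simp)
  · intro u hu
    refine sInf_le ⟨?_, u.2⟩
    rintro w (rfl | rfl)
    exacts [hu (Set.mem_insert x _), hu (Set.mem_insert_of_mem x rfl)]
  · rw [Set.image_pair]
    exact isGLB_pair

/-- The cut points `l₀ = 1 < l₁ < ⋯ < l_{m+1} = n` are encoded 0-based as a strictly monotone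
`l : Fin (m + 2) → Fin n`. -/
theorem restriction_orderIso_and_lattice (n m : ℕ) (χ : Fin n → Letter)
    (l : Fin (m + 2) → Fin n) (hmono : StrictMono l)
    (hl0 : (l 0 : ℕ) = 0) (hlast : (l (Fin.last (m + 1)) : ℕ) + 1 = n)
    (hc : ∀ j : Fin n, (χ j = Letter.c ∧ 0 < (j : ℕ) ∧ (j : ℕ) + 2 ≤ n) ↔
      ∃ i : Fin (m + 2), 0 < (i : ℕ) ∧ (i : ℕ) < m + 1 ∧ j = l i) :
    (0 < m → ∃ F : IBNC χ →
        IBNC (restChi (Set.Iic (l 1)) χ) × IBNC (restChi (Set.Ici (l 1)) χ),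
      (∀ π : IBNC χ,
          ((F π).1 : Setoid (Set.Iic (l 1))) = restrict (Set.Iic (l 1)) (π : Setoid (Fin n)) ∧
          ((F π).2 : Setoid (Set.Ici (l 1))) = restrict (Set.Ici (l 1)) (π : Setoid (Fin n))) ∧
      Function.Bijective F ∧ (∀ π σ : IBNC χ, π ≤ σ ↔ F π ≤ F σ)) ∧
    (∃ G : IBNC χ →
        ∀ i : Fin (m + 1), NC (restChi (Set.Icc (l i.castSucc) (l i.succ)) χ),
      (∀ (π : IBNC χ) (i : Fin (m + 1)),
          (G π i : Setoid (Set.Icc (l i.castSucc) (l i.succ))) =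
            restrict (Set.Icc (l i.castSucc) (l i.succ)) (π : Setoid (Fin n))) ∧
      Function.Bijective G ∧ (∀ π σ : IBNC χ, π ≤ σ ↔ G π ≤ G σ)) ∧
    (∀ x y : IBNC χ, (∃ z : IBNC χ, IsLUB {x, y} z) ∧ (∃ z : IBNC χ, IsGLB {x, y} z)) := by
  have hcut : ∀ t, t ≠ 0 → t ≠ Fin.last (m + 1) → χ (l t) = Letter.c := fun t h0 hl =>
    ((hc (l t)).2 ⟨t, Nat.pos_of_ne_zero (Fin.val_ne_iff.2 h0), Fin.val_lt_last hl, rfl⟩).1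
  have hseq : IsCutSequence χ l :=
    ⟨hmono.monotone, fun x => Fin.le_def.2 (by omega), fun x => Fin.le_def.2 (by omega), hcut⟩
  refine ⟨fun hm => ?_, ?_, exists_isLUB_and_exists_isGLB fun _ => sInf_mem_IBNC⟩
  · have : NeZero n := ⟨by omega⟩
    obtain ⟨e, he⟩ := exists_orderIso_prod (hcut 1 one_ne_zero (Fin.ne_of_val_ne (by rw [Fin.val_one, Fin.val_last]; omega)))
    exact ⟨e, he, e.bijective, fun π σ => e.le_iff_le.symm⟩
  · have hNC : ∀ i, IBNC (restChi (piece l i) χ) = NC (restChi (piece l i) χ) := by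
      refine fun i => IBNC_restChi_Icc_eq_NC fun j h₁ h₂ hj => ?_
      have := (l i.succ).isLt
      obtain ⟨t, -, -, rfl⟩ := (hc j).1 ⟨hj, by omega, by omega⟩
      rw [hmono.lt_iff_lt] at h₁ h₂
      exact not_lt.2 (Fin.castSucc_lt_iff_succ_le.1 h₁) h₂
    let e := hseq.orderIso.trans
      { Equiv.piCongrRight fun i => Equiv.setCongr (hNC i) with map_rel_iff' := Iff.rfl }
    exact ⟨e, fun π i => rfl, e.bijective, fun π σ => e.le_iff_le.symm⟩

end FFB
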